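/- Let $\mathbf{a} = (a, \alpha) \in \mathbb{H}^n$ (with $a \in \mathbb{C}^n$, $\alpha \in \mathbb{R}$) and $A \in U(n)$ define the isometry $\varphi(z,t) = \mathbf{a} \cdot (Az, t)$ of the Heisenberg group. Suppose $\rho(\varphi(x), x) \le \varepsilon$ for all $x \in \overline{B(0,1)}$, where $\varepsilon < 1/2$. Then $\rho(\mathbf{a}) \le \varepsilon$, $|Az - z| \le 2\varepsilon$ for all $z \in \mathbb{C}^n$ with $|z| \le 1$, and $\rho(\varphi(y), y) \le 5 s \varepsilon$ for all $y \in \overline{B(0,s)}$ and all $s \ge 1$. -/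

import Mathlib

/-!
The displacement `φ(z,t)⁻¹ · (z,t)` does not depend on `t`: its `ℂⁿ`-part is `z - a - Az`, affine
in `z`, and its `ℝ`-part is, along each ray `z = r u`, a quadratic polynomial in `r`. Testing the
hypothesis at `z = 0` gives `ρ(𝐚) ≤ ε`, and comparing `z` with `0` gives `|Az - z| ≤ 2ε`.
A quadratic polynomial bounded by `ε²` at `r = -1, 0, 1` is bounded by `4r²ε²` for `|r| ≥ 1`, so
on `B(0,s)` the two parts are at most `3sε` and `4s²ε²`, and `(3sε)⁴ + (4s²ε²)² ≤ (5sε)⁴`.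
-/

noncomputable section

/-- Group law of `ℍⁿ = ℂⁿ × ℝ`: `(z,t)·(w,s) = (z+w, t+s+2 Im⟨z,w⟩)`. -/
def hMul {n : ℕ} (x y : (Fin n → ℂ) × ℝ) : (Fin n → ℂ) × ℝ :=
  (x.1 + y.1, x.2 + y.2 + 2 * (∑ j, x.1 j * (starRingEnd ℂ) (y.1 j)).im)

/-- Group inverse: `(z,t)⁻¹ = (-z, -t)`. -/
def hInv {n : ℕ} (x : (Fin n → ℂ) × ℝ) : (Fin n → ℂ) × ℝ := (-x.1, -x.2)

/-- Homogeneous norm `ρ(z,t) = (|z|⁴ + t²)^{1/4}`. -/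
def hNorm {n : ℕ} (x : (Fin n → ℂ) × ℝ) : ℝ :=
  ((∑ j, Complex.normSq (x.1 j)) ^ 2 + x.2 ^ 2) ^ ((1 : ℝ) / 4)

/-- Heisenberg distance `ρ(x,y) = ρ(x⁻¹·y)`. -/
def hDist {n : ℕ} (x y : (Fin n → ℂ) × ℝ) : ℝ := hNorm (hMul (hInv x) y)

lemma abs_le_of_quadratic {f : ℝ → ℝ} {a b c δ : ℝ} (hf : ∀ s, f s = a * s ^ 2 + b * s + c)
    (hneg : |f (-1)| ≤ δ) (hzero : |f 0| ≤ δ) (hone : |f 1| ≤ δ) {s : ℝ} (hs : 1 ≤ |s|) :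
    |f s| ≤ 4 * s ^ 2 * δ := by
  simp only [hf] at hneg hzero hone ⊢
  have hδ : 0 ≤ δ := (abs_nonneg _).trans hzero
  -- `2a = f 1 + f (-1) - 2 f 0` and `2b = f 1 - f (-1)`
  have ha : |a| ≤ 2 * δ := by
    rw [abs_le] at *; constructor <;> linarith
  have hb : |b| ≤ δ := by
    rw [abs_le] at *; constructor <;> linarith
  have hc : |c| ≤ δ := by simpa using hzero
  have hs_le_sq : |s| ≤ s ^ 2 := by rw [← sq_abs]; nlinarith
  have one_le_sq : 1 ≤ s ^ 2 := hs.trans hs_le_sq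
  calc |a * s ^ 2 + b * s + c| ≤ |a| * s ^ 2 + |b| * |s| + |c| := by
        have := abs_add_three (a * s ^ 2) (b * s) c
        rwa [abs_mul, abs_mul, abs_of_nonneg (sq_nonneg s)] at this
    _ ≤ 2 * δ * s ^ 2 + δ * s ^ 2 + δ * s ^ 2 := by
        gcongr
        exact hc.trans (le_mul_of_one_le_right hδ one_le_sq)
    _ = 4 * s ^ 2 * δ := by ring

open WithLp Matrix ComplexConjugate

namespace Heisenberg

variable {n : ℕ}

lemma sq_norm_toLp (z : Fin n → ℂ) : ‖toLp 2 z‖ ^ 2 = ∑ j, Complex.normSq (z j) := by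
  simp [EuclideanSpace.norm_sq_eq, Complex.normSq_eq_norm_sq]

lemma norm_toLp_eq_sqrt (z : Fin n → ℂ) : ‖toLp 2 z‖ = √(∑ j, Complex.normSq (z j)) := by
  rw [← sq_norm_toLp, Real.sqrt_sq (norm_nonneg _)]

lemma hNorm_eq (x : (Fin n → ℂ) × ℝ) :
    hNorm x = (‖toLp 2 x.1‖ ^ 4 + x.2 ^ 2) ^ (4⁻¹ : ℝ) := by
  rw [hNorm, ← sq_norm_toLp, one_div, ← pow_mul]

lemma hNorm_nonneg (x : (Fin n → ℂ) × ℝ) : 0 ≤ hNorm x := by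
  rw [hNorm_eq]; positivity

lemma hNorm_le_iff {x : (Fin n → ℂ) × ℝ} {c : ℝ} (hc : 0 ≤ c) :
    hNorm x ≤ c ↔ ‖toLp 2 x.1‖ ^ 4 + x.2 ^ 2 ≤ c ^ 4 := by
  rw [← pow_le_pow_iff_left₀ (hNorm_nonneg x) hc four_ne_zero, hNorm_eq,
    ← Real.rpow_natCast, ← Real.rpow_mul (by positivity)]
  norm_num

lemma hNorm_mk_zero (z : Fin n → ℂ) : hNorm (z, 0) = ‖toLp 2 z‖ := by
  rw [hNorm_eq]
  simpa using Real.pow_rpow_inv_natCast (norm_nonneg (toLp 2 z)) four_ne_zero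

lemma hNorm_hInv (x : (Fin n → ℂ) × ℝ) : hNorm (hInv x) = hNorm x := by
  simp [hNorm, hInv, Complex.normSq_neg]

lemma norm_fst_le_of_hNorm_le {x : (Fin n → ℂ) × ℝ} {c : ℝ} (h : hNorm x ≤ c) :
    ‖toLp 2 x.1‖ ≤ c := by
  have hc := (hNorm_nonneg x).trans h
  rw [hNorm_le_iff hc] at h
  exact le_of_pow_le_pow_left₀ four_ne_zero hc (by nlinarith [sq_nonneg x.2])

lemma abs_snd_le_of_hNorm_le {x : (Fin n → ℂ) × ℝ} {c : ℝ} (h : hNorm x ≤ c) :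
    |x.2| ≤ c ^ 2 := by
  have hc := (hNorm_nonneg x).trans h
  rw [hNorm_le_iff hc] at h
  exact abs_le_of_sq_le_sq (by nlinarith [pow_nonneg (norm_nonneg (toLp 2 x.1)) 4])
    (by positivity)

lemma hNorm_le_of_le {x : (Fin n → ℂ) × ℝ} {p q c : ℝ} (hp : ‖toLp 2 x.1‖ ≤ p) (hq : |x.2| ≤ q)
    (hc : 0 ≤ c) (hpq : p ^ 4 + q ^ 2 ≤ c ^ 4) : hNorm x ≤ c := by
  rw [hNorm_le_iff hc]
  have h₁ := pow_le_pow_left₀ (norm_nonneg _) hp 4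
  have h₂ := pow_le_pow_left₀ (abs_nonneg _) hq 2
  rw [sq_abs] at h₂
  linarith

def symp (z w : Fin n → ℂ) : ℝ := (∑ j, z j * conj (w j)).im

lemma hMul_eq (x y : (Fin n → ℂ) × ℝ) :
    hMul x y = (x.1 + y.1, x.2 + y.2 + 2 * symp x.1 y.1) := rfl

lemma symp_smul_left (r : ℝ) (z w : Fin n → ℂ) : symp (r • z) w = r * symp z w := by
  simp only [symp, Pi.smul_apply, Complex.real_smul, mul_assoc, ← Finset.mul_sum,
    Complex.im_ofReal_mul]

lemma symp_smul_right (r : ℝ) (z w : Fin n → ℂ) : symp z (r • w) = r * symp z w := by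
  simp only [symp, Pi.smul_apply, Complex.real_smul, map_mul, Complex.conj_ofReal,
    mul_left_comm (z _), ← Finset.mul_sum, Complex.im_ofReal_mul]

lemma symp_add_left (z z' w : Fin n → ℂ) : symp (z + z') w = symp z w + symp z' w := by
  simp only [symp, Pi.add_apply, add_mul, Finset.sum_add_distrib, Complex.add_im]

lemma symp_neg_left (z w : Fin n → ℂ) : symp (-z) w = -symp z w := by
  simpa using symp_smul_left (-1) z w

lemma symp_zero_right (z : Fin n → ℂ) : symp z 0 = 0 := by
  simp [symp]

/-- The point `φ(z,t)⁻¹ · (z,t)` for `φ = π_𝐚 ∘ φ_A`; it does not depend on `t`. -/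
def displacement (a : (Fin n → ℂ) × ℝ) (A : Matrix (Fin n) (Fin n) ℂ) (z : Fin n → ℂ) :
    (Fin n → ℂ) × ℝ :=
  (z - a.1 - A *ᵥ z, -a.2 - 2 * symp a.1 (A *ᵥ z) - 2 * symp (a.1 + A *ᵥ z) z)

variable (a : (Fin n → ℂ) × ℝ) (A : Matrix (Fin n) (Fin n) ℂ)

lemma hDist_hMul_mulVec (x : (Fin n → ℂ) × ℝ) :
    hDist (hMul a (A *ᵥ x.1, x.2)) x = hNorm (displacement a A x.1) := by
  rw [hDist, hMul_eq, hMul_eq, hInv, displacement, symp_neg_left]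
  congr 1
  ext
  · simp only [Pi.add_apply, Pi.neg_apply, Pi.sub_apply]; ring
  · ring

lemma displacement_zero : displacement a A 0 = hInv a := by
  simp [displacement, hInv, symp_zero_right]

lemma displacement_fst_smul (r : ℝ) (u : Fin n → ℂ) :
    (displacement a A (r • u)).1 = -a.1 - r • (A *ᵥ u - u) := by
  simp only [displacement, mulVec_smul, smul_sub]; abel

lemma displacement_snd_smul (r : ℝ) (u : Fin n → ℂ) :
    (displacement a A (r • u)).2 =
      (-2 * symp (A *ᵥ u) u) * r ^ 2 + (-2 * (symp a.1 (A *ᵥ u) + symp a.1 u)) * r - a.2 := by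
  simp only [displacement, mulVec_smul, symp_add_left, symp_smul_left, symp_smul_right]
  ring

variable {a A} {ε : ℝ}

lemma hNorm_le_of_displacement_le
    (hD : ∀ u : Fin n → ℂ, ‖toLp 2 u‖ ≤ 1 → hNorm (displacement a A u) ≤ ε) :
    hNorm a ≤ ε := by
  simpa [displacement_zero, hNorm_hInv] using hD 0 (by simp)

lemma norm_mulVec_sub_self_le
    (hD : ∀ u : Fin n → ℂ, ‖toLp 2 u‖ ≤ 1 → hNorm (displacement a A u) ≤ ε)
    {u : Fin n → ℂ} (hu : ‖toLp 2 u‖ ≤ 1) :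
    ‖toLp 2 (A *ᵥ u - u)‖ ≤ 2 * ε := by
  have hfst := displacement_fst_smul a A 1 u
  rw [one_smul, one_smul] at hfst
  calc ‖toLp 2 (A *ᵥ u - u)‖ = ‖-toLp 2 a.1 - toLp 2 (displacement a A u).1‖ := by
        rw [hfst]; simp
    _ ≤ ‖toLp 2 a.1‖ + ‖toLp 2 (displacement a A u).1‖ := by
        simpa only [norm_neg] using norm_sub_le (-toLp 2 a.1) _
    _ ≤ ε + ε := add_le_add (norm_fst_le_of_hNorm_le (hNorm_le_of_displacement_le hD))
        (norm_fst_le_of_hNorm_le (hD u hu))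
    _ = 2 * ε := (two_mul ε).symm

lemma hNorm_displacement_smul_le
    (hD : ∀ u : Fin n → ℂ, ‖toLp 2 u‖ ≤ 1 → hNorm (displacement a A u) ≤ ε)
    {s : ℝ} (hs : 1 ≤ s) {u : Fin n → ℂ} (hu : ‖toLp 2 u‖ ≤ 1) :
    hNorm (displacement a A (s • u)) ≤ 5 * s * ε := by
  have hε : 0 ≤ ε := (hNorm_nonneg _).trans (hD 0 (by simp))
  have hfst : ‖toLp 2 (displacement a A (s • u)).1‖ ≤ 3 * s * ε := by
    rw [displacement_fst_smul, toLp_sub, toLp_neg, toLp_smul]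
    calc ‖-toLp 2 a.1 - s • toLp 2 (A *ᵥ u - u)‖
        ≤ ‖toLp 2 a.1‖ + s * ‖toLp 2 (A *ᵥ u - u)‖ := by
          simpa only [norm_neg, norm_smul, Real.norm_of_nonneg (by linarith : (0 : ℝ) ≤ s)]
            using norm_sub_le (-toLp 2 a.1) (s • toLp 2 (A *ᵥ u - u))
      _ ≤ ε + s * (2 * ε) := by
          gcongr
          · exact norm_fst_le_of_hNorm_le (hNorm_le_of_displacement_le hD)
          · exact norm_mulVec_sub_self_le hD hu
      _ ≤ 3 * s * ε := by nlinarith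
  have hsnd_unit : ∀ r : ℝ, |r| ≤ 1 → |(displacement a A (r • u)).2| ≤ ε ^ 2 := fun r hr =>
    abs_snd_le_of_hNorm_le <| hD _ <| by
      rw [toLp_smul, norm_smul, Real.norm_eq_abs]
      exact mul_le_one₀ hr (norm_nonneg _) hu
  have hsnd : |(displacement a A (s • u)).2| ≤ 4 * s ^ 2 * ε ^ 2 :=
    abs_le_of_quadratic (f := fun r => (displacement a A (r • u)).2)
      (fun r => by rw [displacement_snd_smul, sub_eq_add_neg])
      (hsnd_unit _ (by norm_num)) (hsnd_unit _ (by norm_num)) (hsnd_unit _ (by norm_num))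
      (by rwa [abs_of_nonneg (by linarith)])
  refine hNorm_le_of_le hfst hsnd (by positivity) ?_
  nlinarith [pow_nonneg (mul_nonneg (by linarith : (0 : ℝ) ≤ s) hε) 4]

end Heisenberg

open Heisenberg WithLp Matrix

theorem isometry_displacement_on_larger_ball_general {n : ℕ}
    (a : (Fin n → ℂ) × ℝ) (A : Matrix (Fin n) (Fin n) ℂ)
    (φ : (Fin n → ℂ) × ℝ → (Fin n → ℂ) × ℝ)
    (hφ : ∀ x : (Fin n → ℂ) × ℝ, φ x = hMul a (A.mulVec x.1, x.2))
    (ε : ℝ)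
    (hclose : ∀ x : (Fin n → ℂ) × ℝ, hNorm x ≤ 1 → hDist (φ x) x ≤ ε) :
    hNorm a ≤ ε ∧
    (∀ z : Fin n → ℂ, Real.sqrt (∑ j, Complex.normSq (z j)) ≤ 1 →
      Real.sqrt (∑ j, Complex.normSq (A.mulVec z j - z j)) ≤ 2 * ε) ∧
    ∀ s : ℝ, 1 ≤ s → ∀ y : (Fin n → ℂ) × ℝ, hNorm y ≤ s →
      hDist (φ y) y ≤ 5 * s * ε := by
  have hD : ∀ u : Fin n → ℂ, ‖toLp 2 u‖ ≤ 1 → hNorm (displacement a A u) ≤ ε := fun u hu => by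
    have := hclose (u, 0) (by rwa [hNorm_mk_zero])
    rwa [hφ, hDist_hMul_mulVec] at this
  refine ⟨hNorm_le_of_displacement_le hD, fun z hz => ?_, fun s hs y hy => ?_⟩
  · rw [← norm_toLp_eq_sqrt] at hz
    simpa only [norm_toLp_eq_sqrt, Pi.sub_apply] using norm_mulVec_sub_self_le hD hz
  · have hs0 : 0 < s := by linarith
    have hu : ‖toLp 2 (s⁻¹ • y.1)‖ ≤ 1 := by
      rw [toLp_smul, norm_smul, Real.norm_of_nonneg (inv_nonneg.2 hs0.le)]
      exact inv_mul_le_one_of_le₀ (norm_fst_le_of_hNorm_le hy) hs0.le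
    simpa [hφ, hDist_hMul_mulVec, smul_inv_smul₀ hs0.ne'] using
      hNorm_displacement_smul_le hD hs hu

/-- Lemma: if the isometry `φ = π_𝐚 ∘ φ_A` moves every point of `B(0,1)` by at
most `ε < 1/2`, then `ρ(𝐚) ≤ ε`, `|Az - z| ≤ 2ε` on the unit ball of `ℂⁿ`, and
`φ` moves every point of `B(0,s)` by at most `5sε` for all `s ≥ 1`. -/
theorem isometry_displacement_on_larger_ball {n : ℕ}
    (a : (Fin n → ℂ) × ℝ) (A : Matrix (Fin n) (Fin n) ℂ)
    (hA : A ∈ Matrix.unitaryGroup (Fin n) ℂ)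
    (φ : (Fin n → ℂ) × ℝ → (Fin n → ℂ) × ℝ)
    (hφ : ∀ x : (Fin n → ℂ) × ℝ, φ x = hMul a (A.mulVec x.1, x.2))
    (ε : ℝ) (hε : ε < 1 / 2) (hε0 : 0 ≤ ε)
    (hclose : ∀ x : (Fin n → ℂ) × ℝ, hNorm x ≤ 1 → hDist (φ x) x ≤ ε) :
    hNorm a ≤ ε ∧
    (∀ z : Fin n → ℂ, Real.sqrt (∑ j, Complex.normSq (z j)) ≤ 1 →
      Real.sqrt (∑ j, Complex.normSq (A.mulVec z j - z j)) ≤ 2 * ε) ∧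
    ∀ s : ℝ, 1 ≤ s → ∀ y : (Fin n → ℂ) × ℝ, hNorm y ≤ s →
      hDist (φ y) y ≤ 5 * s * ε :=
  isometry_displacement_on_larger_ball_general a A φ hφ ε hclose
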